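/- arXiv:1912.03710 — 2 statements merged into one kernel-verified Lean document; each statement's English description precedes it below -/
import Mathlib

section
/- Let R be an F-pure Noetherian ring of characteristic p, I₁,…,I_t ideals, J an ideal with I₁,…,I_t ⊆ √J, and I = I₁ + ⋯ + I_t. Then c^J(I) = sup { θ₁ + ⋯ + θ_t : θ ∈ B^J(I₁,…,I_t) }, where B^J(I₁,…,I_t) = ⋃_e ⋃_{a ∈ V(p^e)} ∏_i [0, a_i/p^e]. -/
open Ideal Filter MeasureTheory

/-- The `q`-th Frobenius power of an ideal: the ideal generated by `q`-th powers of its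
elements (used with `q = p ^ e`). -/
def Ideal.frobPow {R : Type*} [CommRing R] (J : Ideal R) (q : ℕ) : Ideal R :=
  Ideal.span ((fun a => a ^ q) '' (J : Set R))

/-- The set `V` of exponent vectors `a ∈ ℕ^t` with `I₁^{a₁} ⋯ I_t^{a_t} ⊄ J'`. -/
def Vnu {R : Type*} [CommRing R] {t : ℕ} (I : Fin t → Ideal R) (J' : Ideal R) :
    Set (Fin t → ℕ) :=
  {a | ¬ (∏ i, I i ^ a i) ≤ J'}

universe u v

/-- A ring homomorphism `f : R → S` is pure if for every `R`-module `M`, the natural map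
`M → M ⊗_R S` (with `S` viewed as an `R`-module via `f`) is injective. -/
def RingHom.IsPureHom {R : Type u} {S : Type v} [CommRing R] [CommRing S]
    (f : R →+* S) : Prop :=
  ∀ (M : Type (max u v)) [AddCommGroup M] [Module R M],
    letI : Module R S := Module.compHom S f
    Function.Injective (fun m : M => (TensorProduct.tmul R m (1 : S) : TensorProduct R M S))

/-- `R` is F-pure if the Frobenius endomorphism is a pure ring homomorphism. -/
def IsFPure (p : ℕ) (R : Type u) [CommRing R] [Fact p.Prime] [CharP R p] : Prop :=
  RingHom.IsPureHom (frobenius R p)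

/-- The region `B^{J'}(I; q) = ⋃_{a ∈ V} ∏ᵢ [0, aᵢ/q] ⊆ ℝ^t`. -/
def Breg {R : Type*} [CommRing R] {t : ℕ} (I : Fin t → Ideal R) (J' : Ideal R) (q : ℕ) :
    Set (Fin t → ℝ) :=
  ⋃ a ∈ Vnu I J', Set.univ.pi fun i => Set.Icc (0 : ℝ) ((a i : ℝ) / (q : ℝ))

/-- `ν_I^{J'} = max {n : I^n ⊄ J'}`. -/
noncomputable def nuF {R : Type*} [CommRing R] (I J' : Ideal R) : ℕ :=
  sSup {n : ℕ | ¬ I ^ n ≤ J'}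

/-! Write `ν(e)` for `ν_I^{J^{[p^e]}}` with `I = ∑ Iᵢ`. Purity of Frobenius means that
`x ^ p ∈ K^{[p]}` forces `x ∈ K`, so `ν(e + 1) ≥ p ν(e)` and `ν(e)/p^e` increases to `c`.
By the multinomial expansion, `I ^ n ⊄ K` iff some `∏ Iᵢ ^ aᵢ` with `∑ aᵢ = n` is not in `K`.
Hence every `θ` in the box of `a ∈ V(p^e)` has `∑ θᵢ ≤ ∑ aᵢ / p^e ≤ ν(e)/p^e ≤ c`, while
`ν(e)/p^e` itself is the coordinate sum of the corner of such a box. -/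

lemma RingHom.IsPureHom.comap_map_eq_self {R S : Type u} [CommRing R] [CommRing S]
    {f : R →+* S} (hf : f.IsPureHom) (K : Ideal R) : (K.map f).comap f = K := by
  refine le_antisymm (fun x hx => ?_) Ideal.le_comap_map
  let : Algebra R S := f.toAlgebra
  have hinj : Function.Injective fun m : R ⧸ K => m ⊗ₜ[R] (1 : S) := hf (R ⧸ K)
  rw [← Ideal.Quotient.eq_zero_iff_mem]
  refine hinj ((TensorProduct.quotTensorEquivQuotSMul S K).injective ?_)
  dsimp only
  rw [TensorProduct.zero_tmul, TensorProduct.quotTensorEquivQuotSMul_mk_tmul, map_zero,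
    Submodule.Quotient.mk_eq_zero, Ideal.smul_top_eq_map]
  simpa [Algebra.smul_def, RingHom.algebraMap_toAlgebra] using hx

lemma IsFPure.mem_of_pow_mem_frobPow {p : ℕ} {R : Type u} [CommRing R] [Fact p.Prime]
    [CharP R p] (hFP : IsFPure p R) {K : Ideal R} {x : R} (hx : x ^ p ∈ K.frobPow p) :
    x ∈ K := by
  rw [← RingHom.IsPureHom.comap_map_eq_self hFP K]
  exact hx

namespace Ideal

variable {R : Type*} [CommRing R]

lemma frobPow_mul_le (J : Ideal R) (q₁ q₂ : ℕ) :
    J.frobPow (q₁ * q₂) ≤ (J.frobPow q₁).frobPow q₂ := by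
  rw [frobPow, span_le]
  rintro _ ⟨a, ha, rfl⟩
  exact subset_span ⟨a ^ q₁, subset_span ⟨a, ha, rfl⟩, (pow_mul a q₁ q₂).symm⟩

lemma le_radical_frobPow (J : Ideal R) (q : ℕ) : J ≤ (J.frobPow q).radical :=
  fun a ha => ⟨q, subset_span ⟨a, ha, rfl⟩⟩

lemma sum_pow_le_iff {ι : Type*} [DecidableEq ι] (s : Finset ι) (I : ι → Ideal R) (n : ℕ)
    (K : Ideal R) :
    (∑ i ∈ s, I i) ^ n ≤ K ↔ ∀ a ∈ s.piAntidiag n, ∏ i ∈ s, I i ^ a i ≤ K := by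
  constructor
  · intro h a ha
    rw [Finset.mem_piAntidiag] at ha
    refine le_trans ?_ (ha.1 ▸ h)
    rw [← Finset.prod_pow_eq_pow_sum]
    exact Finset.prod_le_prod' fun i hi =>
      pow_le_pow_left' (Finset.single_le_sum (fun _ _ => bot_le) hi) _
  · intro h
    rw [Finset.sum_pow_eq_sum_piAntidiag, sum_eq_sup, Finset.sup_le_iff]
    exact fun a ha => mul_le_right.trans (h a ha)

end Ideal

section nuF

variable {R : Type*} [CommRing R] {I K : Ideal R}

lemma bddAbove_setOf_pow_not_le [IsNoetherianRing R] (h : I ≤ K.radical) :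
    BddAbove {n : ℕ | ¬ I ^ n ≤ K} := by
  obtain ⟨k, hk⟩ := Ideal.exists_pow_le_of_le_radical_of_fg h (IsNoetherian.noetherian I)
  exact ⟨k, fun n hn => not_lt.mp fun hkn => hn ((Ideal.pow_le_pow_right hkn.le).trans hk)⟩

lemma bddAbove_setOf_pow_not_le_frobPow [IsNoetherianRing R] {J : Ideal R} (h : I ≤ J.radical)
    (q : ℕ) : BddAbove {n : ℕ | ¬ I ^ n ≤ J.frobPow q} :=
  bddAbove_setOf_pow_not_le <|
    h.trans (Ideal.radical_le_radical_iff.mpr (J.le_radical_frobPow q))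

lemma le_nuF (hb : BddAbove {n : ℕ | ¬ I ^ n ≤ K}) {n : ℕ} (hn : ¬ I ^ n ≤ K) :
    n ≤ nuF I K :=
  le_csSup hb hn

lemma pow_nuF_not_le (hb : BddAbove {n : ℕ | ¬ I ^ n ≤ K}) (hK : K ≠ ⊤) :
    ¬ I ^ nuF I K ≤ K :=
  Nat.sSup_mem ⟨0, by simpa [Ideal.one_eq_top, top_le_iff] using hK⟩ hb

@[simp]
lemma nuF_top (I : Ideal R) : nuF I ⊤ = 0 := by
  simp [nuF]

end nuF

section FPure

variable {p : ℕ} {R : Type u} [CommRing R] [Fact p.Prime] [CharP R p]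

lemma IsFPure.pow_not_le_frobPow (hFP : IsFPure p R) {I K : Ideal R} {n : ℕ}
    (h : ¬ I ^ n ≤ K) : ¬ I ^ (p * n) ≤ K.frobPow p := fun hle =>
  h fun x hx => hFP.mem_of_pow_mem_frobPow <| hle <| by
    simpa only [← pow_mul, mul_comm n p] using Ideal.pow_mem_pow hx p

lemma IsFPure.mul_nuF_frobPow_le [IsNoetherianRing R] (hFP : IsFPure p R) {I J : Ideal R}
    (hI : I ≤ J.radical) (e : ℕ) :
    p * nuF I (J.frobPow (p ^ e)) ≤ nuF I (J.frobPow (p ^ (e + 1))) := by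
  by_cases hK : J.frobPow (p ^ e) = ⊤
  · simp [hK]
  refine le_nuF (bddAbove_setOf_pow_not_le_frobPow hI _) fun hle => ?_
  refine hFP.pow_not_le_frobPow (pow_nuF_not_le (bddAbove_setOf_pow_not_le_frobPow hI _) hK) ?_
  exact hle.trans (pow_succ p e ▸ J.frobPow_mul_le _ _)

lemma IsFPure.monotone_nuF_frobPow_div [IsNoetherianRing R] (hFP : IsFPure p R)
    {I J : Ideal R} (hI : I ≤ J.radical) :
    Monotone fun e : ℕ => (nuF I (J.frobPow (p ^ e)) : ℝ) / (p : ℝ) ^ e := by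
  have hp : (0 : ℝ) < p := Nat.cast_pos.mpr (Fact.out : p.Prime).pos
  refine monotone_nat_of_le_succ fun e => ?_
  calc (nuF I (J.frobPow (p ^ e)) : ℝ) / (p : ℝ) ^ e
      = ((p * nuF I (J.frobPow (p ^ e)) : ℕ) : ℝ) / (p : ℝ) ^ (e + 1) := by
        push_cast; field_simp; ring
    _ ≤ (nuF I (J.frobPow (p ^ (e + 1))) : ℝ) / (p : ℝ) ^ (e + 1) := by
        gcongr; exact hFP.mul_nuF_frobPow_le hI e

end FPure

section Breg

variable {R : Type*} [CommRing R] {t : ℕ} {I : Fin t → Ideal R} {K : Ideal R} {q : ℕ}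
  {θ : Fin t → ℝ}

lemma sum_nonneg_of_mem_Breg (hθ : θ ∈ Breg I K q) : 0 ≤ ∑ i, θ i := by
  obtain ⟨a, -, hbox⟩ := Set.mem_iUnion₂.mp hθ
  exact Finset.sum_nonneg fun i _ => (hbox i trivial).1

lemma sum_le_nuF_div_of_mem_Breg (hb : BddAbove {n : ℕ | ¬ (∑ i, I i) ^ n ≤ K})
    (hθ : θ ∈ Breg I K q) : ∑ i, θ i ≤ (nuF (∑ i, I i) K : ℝ) / q := by
  classical
  obtain ⟨a, haV, hbox⟩ := Set.mem_iUnion₂.mp hθ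
  have hsum : ∑ i, a i ≤ nuF (∑ i, I i) K := le_nuF hb fun hle =>
    haV <| (Ideal.sum_pow_le_iff _ I _ K).mp hle a (by simp)
  calc ∑ i, θ i ≤ ∑ i, (a i : ℝ) / q := Finset.sum_le_sum fun i _ => (hbox i trivial).2
    _ = ((∑ i, a i : ℕ) : ℝ) / q := by rw [Nat.cast_sum, Finset.sum_div]
    _ ≤ (nuF (∑ i, I i) K : ℝ) / q := by gcongr

lemma nuF_div_mem_image_sum_Breg (hb : BddAbove {n : ℕ | ¬ (∑ i, I i) ^ n ≤ K})
    (hK : K ≠ ⊤) :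
    (nuF (∑ i, I i) K : ℝ) / q ∈ (fun θ : Fin t → ℝ => ∑ i, θ i) '' Breg I K q := by
  classical
  obtain ⟨a, ha, haV⟩ :
      ∃ a ∈ Finset.univ.piAntidiag (nuF (∑ i, I i) K), ¬ ∏ i, I i ^ a i ≤ K := by
    simpa only [Ideal.sum_pow_le_iff, not_forall, exists_prop] using pow_nuF_not_le hb hK
  refine ⟨fun i => (a i : ℝ) / q,
    Set.mem_iUnion₂.mpr ⟨a, haV, fun i _ => ⟨by positivity, le_rfl⟩⟩, ?_⟩
  rw [Finset.mem_piAntidiag] at ha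
  simp only [← Finset.sum_div, ← Nat.cast_sum, ha.1]

end Breg

/-- For `R` F-pure, `c^J(I₁ + ⋯ + I_t) = sup {θ₁ + ⋯ + θ_t : θ ∈ B^J(I₁,…,I_t)}`. -/
theorem stmt14 {R : Type u} [CommRing R] [IsNoetherianRing R] (p : ℕ) [Fact p.Prime]
    [CharP R p] (hFP : IsFPure p R) {t : ℕ} (I : Fin t → Ideal R) (J : Ideal R)
    (hrad : ∀ i, I i ≤ J.radical) (c : ℝ)
    (hc : Tendsto (fun e : ℕ => (nuF (∑ i, I i) (J.frobPow (p ^ e)) : ℝ) / (p : ℝ) ^ e)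
      atTop (nhds c)) :
    c = sSup ((fun θ : Fin t → ℝ => ∑ i, θ i) ''
      (⋃ e : ℕ, Breg I (J.frobPow (p ^ e)) (p ^ e))) := by
  set S := (fun θ : Fin t → ℝ => ∑ i, θ i) '' (⋃ e : ℕ, Breg I (J.frobPow (p ^ e)) (p ^ e))
  have hIrad : ∑ i, I i ≤ J.radical := by
    rw [Ideal.sum_eq_sup]; exact Finset.sup_le fun i _ => hrad i
  have hbdd := bddAbove_setOf_pow_not_le_frobPow hIrad
  have hle_c := (hFP.monotone_nuF_frobPow_div hIrad).ge_of_tendsto hc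
  have hS_le : ∀ x ∈ S, x ≤ c := by
    rintro _ ⟨θ, hθ, rfl⟩
    obtain ⟨e, hθ⟩ := Set.mem_iUnion.mp hθ
    exact (sum_le_nuF_div_of_mem_Breg (hbdd _) hθ).trans (by rw [Nat.cast_pow]; exact hle_c e)
  have hS_nonneg : ∀ x ∈ S, 0 ≤ x := by
    rintro _ ⟨θ, hθ, rfl⟩
    obtain ⟨e, hθ⟩ := Set.mem_iUnion.mp hθ
    exact sum_nonneg_of_mem_Breg hθ
  have hle_sSup :
      ∀ e, (nuF (∑ i, I i) (J.frobPow (p ^ e)) : ℝ) / (p : ℝ) ^ e ≤ sSup S := by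
    intro e
    by_cases hK : J.frobPow (p ^ e) = ⊤
    · simpa [hK] using Real.sSup_nonneg hS_nonneg
    refine le_csSup ⟨c, hS_le⟩ ?_
    obtain ⟨θ, hθ, hsum⟩ := nuF_div_mem_image_sum_Breg (q := p ^ e) (hbdd _) hK
    exact ⟨θ, Set.mem_iUnion_of_mem e hθ, by simpa using hsum⟩
  exact le_antisymm (le_of_tendsto' hc hle_sSup)
    (Real.sSup_le hS_le ((hle_c 0).trans' (by positivity)))
end

section
/- Let R be an F-pure Noetherian ring of characteristic p, I, J ideals with I ⊆ J, and f₁,…,f_t a minimal generating set of I. If Vol_F^J(f₁,…,f_t) = 1, then c^J(I) = t. -/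
open Ideal Filter MeasureTheory

universe u v

/-! Every exponent vector `a ∈ V_q` has entries `aᵢ < q` (as `f_i^q ∈ J^{[q]}`) and coordinate sum
at most `ν_q := ν_I^{J^{[q]}}`, while `ν_q ≤ t(q-1)` by pigeonhole on the monomials of `I^n`. Hence
`V_q` misses the corner box `[⌊ν_q/t⌋ + 1, q)^t`, whose normalized volume tends to `(1 - c/t)^t`.
A volume of `1` therefore forces `(1 - c/t)^t = 0`, that is `c = t`. -/

namespace Ideal

variable {R : Type*} [CommRing R]

theorem pow_mem_frobPow {J : Ideal R} {q a : ℕ} {x : R} (hx : x ∈ J) (h : q ≤ a) :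
    x ^ a ∈ J.frobPow q := by
  rw [← Nat.add_sub_cancel' h, pow_add]
  exact mul_mem_right _ _ (subset_span ⟨x, hx, rfl⟩)

theorem prod_span_singleton_pow_le_frobPow {ι : Type*} [Fintype ι] {f : ι → R} {J : Ideal R}
    {q : ℕ} {a : ι → ℕ} {i : ι} (hfi : f i ∈ J) (h : q ≤ a i) :
    ∏ j, span {f j} ^ a j ≤ J.frobPow q :=
  calc ∏ j, span {f j} ^ a j ≤ span {f i} ^ a i :=
        prod_le_inf.trans (Finset.inf_le (Finset.mem_univ i))
    _ ≤ J.frobPow q := by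
      rw [span_singleton_pow, span_singleton_le_iff_mem]
      exact pow_mem_frobPow hfi h

theorem span_range_pow_le_frobPow {ι : Type*} [Fintype ι] {f : ι → R} {J : Ideal R} {q n : ℕ}
    (hf : ∀ i, f i ∈ J) (hn : Fintype.card ι * (q - 1) < n) :
    span (Set.range f) ^ n ≤ J.frobPow q := by
  classical
  rw [span_range_eq_iSup, ← Finset.sup_univ_eq_iSup, ← sum_eq_sup,
    Finset.sum_pow_eq_sum_piAntidiag, sum_eq_sup, Finset.sup_le_iff]
  intro a ha
  rw [Finset.mem_piAntidiag] at ha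
  obtain ⟨i, hi⟩ : ∃ i, q ≤ a i := by
    by_contra! hlt
    have := Finset.sum_le_card_nsmul Finset.univ a (q - 1) fun i _ => Nat.le_sub_one_of_lt (hlt i)
    simp only [ha.1, Finset.card_univ, smul_eq_mul] at this
    omega
  exact mul_le_right.trans (prod_span_singleton_pow_le_frobPow (hf i) hi)

end Ideal

section Threshold

variable {R : Type*} [CommRing R]

theorem nuF_le_of_pow_le {I J' : Ideal R} {N : ℕ} (h : ∀ n, N < n → I ^ n ≤ J') :
    nuF I J' ≤ N :=
  csSup_le' fun n hn => by
    by_contra! hN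
    exact hn (h n hN)

theorem le_nuF_of_not_pow_le {I J' : Ideal R} {N n : ℕ} (h : ∀ m, N < m → I ^ m ≤ J')
    (hn : ¬ I ^ n ≤ J') : n ≤ nuF I J' :=
  le_csSup ⟨N, fun m hm => by
    by_contra! hN
    exact hm (h m hN)⟩ hn

theorem lt_of_mem_Vnu_frobPow {t q : ℕ} {f : Fin t → R} {J : Ideal R} {a : Fin t → ℕ}
    (hf : ∀ i, f i ∈ J) (ha : a ∈ Vnu (fun i => Ideal.span {f i}) (J.frobPow q)) (i : Fin t) :
    a i < q :=
  lt_of_not_ge fun h => ha (Ideal.prod_span_singleton_pow_le_frobPow (hf i) h)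

theorem sum_le_nuF_of_mem_Vnu {t N : ℕ} {I : Fin t → Ideal R} {I₀ J' : Ideal R}
    {a : Fin t → ℕ} (hI : ∀ i, I i ≤ I₀) (hpow : ∀ n, N < n → I₀ ^ n ≤ J')
    (ha : a ∈ Vnu I J') : ∑ i, a i ≤ nuF I₀ J' := by
  refine le_nuF_of_not_pow_le hpow fun h => ha ?_
  rw [← Finset.prod_pow_eq_pow_sum] at h
  exact (Finset.prod_le_prod' fun i _ => Ideal.pow_right_mono (hI i) (a i)).trans h

end Threshold

theorem ncard_add_pow_le_of_sum_le {t q m ν : ℕ} {V : Set (Fin t → ℕ)}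
    (hlt : ∀ a ∈ V, ∀ i, a i < q) (hsum : ∀ a ∈ V, ∑ i, a i ≤ ν) (hν : ν < t * m) :
    V.ncard + (q - m) ^ t ≤ q ^ t := by
  classical
  let box (l : ℕ) : Set (Fin t → ℕ) := ↑(Fintype.piFinset fun _ : Fin t => Finset.Ico l q)
  have hcard (l : ℕ) : (box l).ncard = (q - l) ^ t := by
    rw [Set.ncard_coe_finset, Fintype.card_piFinset]
    simp
  have hV : V ⊆ box 0 := fun a ha => by simpa [box] using hlt a ha
  have hbox : box m ⊆ box 0 := by
    simp only [box, Finset.coe_subset]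
    exact Fintype.piFinset_subset _ _ fun _ => Finset.Ico_subset_Ico_left (Nat.zero_le m)
  have hdisj : Disjoint V (box m) := Set.disjoint_left.2 fun a ha hm => by
    have hge : t * m ≤ ∑ i, a i := by
      simpa using Finset.card_nsmul_le_sum Finset.univ a m fun i _ => by
        simp only [box, Finset.mem_coe, Fintype.mem_piFinset, Finset.mem_Ico] at hm
        exact (hm i).1
    exact absurd (hsum a ha) (by omega)
  calc V.ncard + (q - m) ^ t = (V ∪ box m).ncard := by
        rw [Set.ncard_union_eq hdisj ((box 0).toFinite.subset hV) (box m).toFinite, hcard]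
    _ ≤ (box 0).ncard := Set.ncard_le_ncard (Set.union_subset hV hbox) (box 0).toFinite
    _ = q ^ t := by rw [hcard, Nat.sub_zero]

theorem ncard_div_add_pow_le_one {t q ν : ℕ} {V : Set (Fin t → ℕ)} (ht : 0 < t) (hq : 0 < q)
    (hlt : ∀ a ∈ V, ∀ i, a i < q) (hsum : ∀ a ∈ V, ∑ i, a i ≤ ν) (hν : ν ≤ t * (q - 1)) :
    (V.ncard : ℝ) / q ^ t + (1 - ν / q / t - 1 / q) ^ t ≤ 1 := by
  -- `m` is the least natural number with `ν < t * m`.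
  set m := ν / t + 1
  have hmq : m ≤ q := by
    have := Nat.div_le_of_le_mul hν
    omega
  have hcount := ncard_add_pow_le_of_sum_le hlt hsum (Nat.lt_mul_div_succ ν ht)
  have hqR : (0 : ℝ) < q := by exact_mod_cast hq
  have htR : (0 : ℝ) < t := by exact_mod_cast ht
  have hνR : (ν : ℝ) / t ≤ q - 1 := by
    have := (Nat.cast_le (α := ℝ)).2 hν
    rw [Nat.cast_mul, Nat.cast_sub hq, Nat.cast_one] at this
    rwa [div_le_iff₀' htR]
  have hbase : (1 - ν / q / t - 1 / q : ℝ) = (q - ν / t - 1) / q := by field_simp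
  have hcorner : (q - ν / t - 1 : ℝ) ≤ ((q - m : ℕ) : ℝ) := by
    rw [Nat.cast_sub hmq, Nat.cast_add, Nat.cast_one]
    linarith [Nat.cast_div_le (α := ℝ) (m := ν) (n := t)]
  calc (V.ncard : ℝ) / q ^ t + (1 - ν / q / t - 1 / q) ^ t
      ≤ (V.ncard : ℝ) / q ^ t + (((q - m : ℕ) : ℝ) / q) ^ t := by
        rw [hbase]
        gcongr
        exact div_nonneg (by linarith) hqR.le
    _ = ((V.ncard + (q - m) ^ t : ℕ) : ℝ) / (q : ℝ) ^ t := by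
        rw [Nat.cast_add, Nat.cast_pow, add_div, div_pow]
    _ ≤ 1 := by
        rw [div_le_one (by positivity)]
        exact_mod_cast hcount

theorem stmt15_general {R : Type u} [CommRing R] (p : ℕ) [Fact p.Prime]
    {t : ℕ} (f : Fin t → R) (I J : Ideal R)
    (hIJ : I ≤ J) (hgen : Ideal.span (Set.range f) = I) (c : ℝ)
    (hVol : Tendsto
      (fun e : ℕ => ((Vnu (fun i => Ideal.span {f i}) (J.frobPow (p ^ e))).ncard : ℝ) /
        (p : ℝ) ^ (e * t)) atTop (nhds 1))
    (hc : Tendsto (fun e : ℕ => (nuF I (J.frobPow (p ^ e)) : ℝ) / (p : ℝ) ^ e)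
      atTop (nhds c)) :
    c = t := by
  subst hgen
  have hf (i : Fin t) : f i ∈ J := hIJ (Ideal.subset_span ⟨i, rfl⟩)
  have hp : 1 < p := (Fact.out : p.Prime).one_lt
  have hpow (e n : ℕ) (hn : t * (p ^ e - 1) < n) :
      Ideal.span (Set.range f) ^ n ≤ J.frobPow (p ^ e) :=
    Ideal.span_range_pow_le_frobPow hf (by rwa [Fintype.card_fin])
  have hν (e : ℕ) := nuF_le_of_pow_le (hpow e)
  have hct : c ≤ t := le_of_tendsto hc <| Eventually.of_forall fun e => by
    rw [div_le_iff₀ (by positivity)]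
    exact_mod_cast (hν e).trans (Nat.mul_le_mul_left t (Nat.sub_le _ 1))
  rcases Nat.eq_zero_or_pos t with rfl | ht
  · have hc0 : (0 : ℝ) ≤ c := ge_of_tendsto' hc fun e => by positivity
    exact le_antisymm hct (by simpa using hc0)
  have hest (e : ℕ) := ncard_div_add_pow_le_one ht (pow_pos (by omega) e)
    (fun a ha => lt_of_mem_Vnu_frobPow hf ha)
    (fun a ha => sum_le_nuF_of_mem_Vnu (fun i => Ideal.span_mono (by simp)) (hpow e) ha) (hν e)
  push_cast [← pow_mul] at hest
  have hinv : Tendsto (fun e : ℕ => 1 / (p : ℝ) ^ e) atTop (nhds 0) :=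
    tendsto_const_nhds.div_atTop (tendsto_pow_atTop_atTop_of_one_lt (by exact_mod_cast hp))
  have hlim := hVol.add
    ((tendsto_const_nhds (x := (1 : ℝ))).sub (hc.div_const t) |>.sub hinv |>.pow t)
  have hzero : (1 - c / t) ^ t = 0 := le_antisymm (by simpa using le_of_tendsto' hlim hest)
    (pow_nonneg (sub_nonneg.2 ((div_le_one (by positivity)).2 hct)) t)
  rwa [pow_eq_zero_iff ht.ne', sub_eq_zero, eq_comm, div_eq_one_iff_eq (by positivity)] at hzero

/-- For `R` F-pure, `I ⊆ J`, and `f₁,…,f_t` minimal generators of `I`: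
if `Vol_F^J(f₁,…,f_t) = 1` then `c^J(I) = t`. -/
theorem stmt15 {R : Type u} [CommRing R] [IsNoetherianRing R] (p : ℕ) [Fact p.Prime]
    [CharP R p] (hFP : IsFPure p R) {t : ℕ} (f : Fin t → R) (I J : Ideal R)
    (hIJ : I ≤ J) (hgen : Ideal.span (Set.range f) = I)
    (hmin : ∀ s : Finset R, Ideal.span (s : Set R) = I → t ≤ s.card) (c : ℝ)
    (hVol : Tendsto
      (fun e : ℕ => ((Vnu (fun i => Ideal.span {f i}) (J.frobPow (p ^ e))).ncard : ℝ) /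
        (p : ℝ) ^ (e * t)) atTop (nhds 1))
    (hc : Tendsto (fun e : ℕ => (nuF I (J.frobPow (p ^ e)) : ℝ) / (p : ℝ) ^ e)
      atTop (nhds c)) :
    c = t :=
  stmt15_general p f I J hIJ hgen c hVol hc
end
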